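/- arXiv:0709.0512 — 5 statements merged into one kernel-verified Lean document; each statement's English description precedes it below -/
import Mathlib

section
/- Let n ≥ 2 be an integer and let p₀ be a real number with 1 ≤ p₀ < n. Define a sequence (p_k) of real numbers by p_0 = p₀ and p_{k+1} = n² p_k / ((n − p_k)² + n p_k). Then for every k ≥ 0 one has 1 ≤ p_k < n, and the sequence is strictly increasing: p_{k+1} > p_k for all k. -/
lemma seq_step (n x : ℝ) (hx1 : 1 ≤ x) (hxn : x < n) :
    x < n ^ 2 * x / ((n - x) ^ 2 + n * x) ∧ n ^ 2 * x / ((n - x) ^ 2 + n * x) < n := by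
  have hx0 : 0 < x := lt_of_lt_of_le one_pos hx1
  have hn0 : 1 < n := lt_of_le_of_lt hx1 hxn
  have hD : 0 < (n - x) ^ 2 + n * x := by nlinarith [sq_nonneg (n - x)]
  constructor
  · rw [lt_div_iff₀ hD]; nlinarith [mul_pos (mul_pos hx0 hx0) (sub_pos.mpr hxn)]
  · rw [div_lt_iff₀ hD]; nlinarith [mul_pos hx0 (mul_pos (sub_pos.mpr hxn) (sub_pos.mpr hxn))]

theorem sequence_bounds_and_monotone
    (n : ℕ) (hn : 2 ≤ n) (p₀ : ℝ) (hp₀1 : 1 ≤ p₀) (hp₀n : p₀ < n)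
    (p : ℕ → ℝ) (hp0 : p 0 = p₀)
    (hrec : ∀ k : ℕ, p (k + 1) = (n : ℝ) ^ 2 * p k / (((n : ℝ) - p k) ^ 2 + (n : ℝ) * p k)) :
    (∀ k : ℕ, 1 ≤ p k ∧ p k < n) ∧ (∀ k : ℕ, p k < p (k + 1)) := by
  have hb : ∀ k : ℕ, 1 ≤ p k ∧ p k < n := by
    intro k
    induction k with
    | zero => exact ⟨hp0 ▸ hp₀1, hp0 ▸ hp₀n⟩
    | succ m ih =>
      obtain ⟨h1, h2⟩ := ih
      obtain ⟨hl, hr⟩ := seq_step (n : ℝ) (p m) h1 h2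
      rw [hrec m]
      exact ⟨le_of_lt (lt_of_le_of_lt h1 hl), hr⟩
  refine ⟨hb, fun k => ?_⟩
  obtain ⟨h1, h2⟩ := hb k
  rw [hrec k]
  exact (seq_step (n : ℝ) (p k) h1 h2).1
end

section
/- Let n ≥ 2 be an integer and let p₀ be a real number with 1 ≤ p₀ < n. Define a sequence (p_k) of real numbers by p_0 = p₀ and p_{k+1} = n² p_k / ((n − p_k)² + n p_k). Then the sequence (p_k) converges to n as k → ∞. -/
theorem sequence_tendsto_n
    (n : ℕ) (hn : 2 ≤ n) (p₀ : ℝ) (hp₀1 : 1 ≤ p₀) (hp₀n : p₀ < n)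
    (p : ℕ → ℝ) (hp0 : p 0 = p₀)
    (hrec : ∀ k : ℕ, p (k + 1) = (n : ℝ) ^ 2 * p k / (((n : ℝ) - p k) ^ 2 + (n : ℝ) * p k)) :
    Filter.Tendsto p Filter.atTop (nhds (n : ℝ)) := by
  have hn2 : (2:ℝ) ≤ (n:ℝ) := by exact_mod_cast hn
  set N : ℝ := (n:ℝ) with hN
  have hinv : ∀ k, 1 ≤ p k ∧ p k < N := by
    intro k
    induction k with
    | zero => exact ⟨hp0 ▸ hp₀1, hp0 ▸ hp₀n⟩
    | succ k ih =>
      obtain ⟨h1, h2⟩ := ih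
      have hD : (0:ℝ) < (N - p k)^2 + N * p k := by nlinarith
      rw [hrec k]
      constructor
      · rw [le_div_iff₀ hD]; nlinarith
      · rw [div_lt_iff₀ hD]; nlinarith
  have hM : (0:ℝ) < N^2 - N + 1 := by nlinarith
  set c : ℝ := (N^2 - N)/(N^2 - N + 1) with hc
  have hc0 : 0 ≤ c := by
    apply div_nonneg _ hM.le
    nlinarith
  have hc1 : c < 1 := by rw [div_lt_one hM]; linarith
  have key : ∀ k, N - p (k+1) ≤ c * (N - p k) := by
    intro k
    obtain ⟨h1, h2⟩ := hinv k
    have hd0 : 0 ≤ N - p k := by linarith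
    have hD : (0:ℝ) < (N - p k)^2 + N * p k := by nlinarith
    have heq : N - p (k+1) = N * (N - p k)^2 / ((N - p k)^2 + N * p k) := by
      rw [hrec k]; field_simp; ring
    rw [heq, div_le_iff₀ hD, hc, div_mul_eq_mul_div, div_mul_eq_mul_div, le_div_iff₀ hM]
    have haux : N * (N - p k) ≤ (N^2 - N) * (p k)^2 := by
      nlinarith [mul_nonneg (by nlinarith : (0:ℝ) ≤ N^2 - N) (by nlinarith : (0:ℝ) ≤ (p k)^2 - 1)]
    nlinarith [mul_nonneg hd0 (by linarith : (0:ℝ) ≤ (N^2 - N) * (p k)^2 - N * (N - p k))]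
  have hbound : ∀ k, N - p k ≤ (N - p₀) * c ^ k := by
    intro k
    induction k with
    | zero => simp [hp0]
    | succ k ih =>
      calc N - p (k+1) ≤ c * (N - p k) := key k
        _ ≤ c * ((N - p₀) * c ^ k) := by
            apply mul_le_mul_of_nonneg_left ih hc0
        _ = (N - p₀) * c ^ (k+1) := by ring
  have h1 : Filter.Tendsto (fun k => (N - p₀) * c ^ k) Filter.atTop (nhds 0) := by
    have := tendsto_pow_atTop_nhds_zero_of_lt_one hc0 hc1
    simpa using this.const_mul (N - p₀)
  have h2 : Filter.Tendsto (fun k => N - p k) Filter.atTop (nhds 0) :=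
    squeeze_zero (fun k => by have := (hinv k).2; linarith) hbound h1
  have h3 : Filter.Tendsto (fun k => N - (N - p k)) Filter.atTop (nhds (N - 0)) :=
    tendsto_const_nhds.sub h2
  simpa using h3
end

section
/- Let n ≥ 2 be an integer and let 1 ≤ p₀ < n, and let A > 0. Assume the Sobolev inequality (∫ |u|^{n p₀/(n−p₀)})^{(n−p₀)/n} ≤ A ∫ |∇u|^{p₀} holds for every continuously differentiable u : ℝ^n → ℝ with compact support. Then for every real p with p₀ < p ≤ n² p₀ / ((n−p₀)² + n p₀), setting r_p = p(n−p₀)/(p₀(n−p)), the inequality (∫ |u|^{n p/(n−p)})^{(n−p)/n} ≤ (A r_p^{p₀})^{p/p₀} ∫ |∇u|^p holds for every continuously differentiable u : ℝ^n → ℝ with compact support. -/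
/-!
Apply the `p₀`-Sobolev inequality to `v = |u| ^ γ` with `γ = r_p > 1`. Since
`|∇v| = γ |u| ^ (γ - 1) |∇u|`, Hölder's inequality with exponents `p / (p - p₀)` and `p / p₀`
bounds `∫ |∇v| ^ p₀` by `(∫ |u| ^ p*) ^ ((p - p₀) / p) (∫ |∇u| ^ p) ^ (p₀ / p)`, where
`p* = n p / (n - p)`; the value of `γ` is exactly the one for which `|v| ^ p₀*` and the
Hölder factor `(|u| ^ ((γ - 1) p₀)) ^ (p / (p - p₀))` both equal `|u| ^ p*`. As `p < n`, the power
`(p - p₀) / p` of `∫ |u| ^ p*` on the right is smaller than the power `(n - p₀) / n` on the left,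
so it can be absorbed.
-/

open MeasureTheory

section AbsRpow

variable {E : Type*} [NormedAddCommGroup E] [NormedSpace ℝ E] {u : E → ℝ} {γ : ℝ}

theorem norm_fderiv_abs_rpow (hγ : 1 < γ) {x : E} (hu : DifferentiableAt ℝ u x) :
    ‖fderiv ℝ (fun y => |u y| ^ γ) x‖ = γ * |u x| ^ (γ - 1) * ‖fderiv ℝ u x‖ := by
  have hγpos : 0 < γ := one_pos.trans hγ
  have hderiv : |γ * |u x| ^ (γ - 2) * u x| = γ * |u x| ^ (γ - 1) := by
    rcases eq_or_ne (u x) 0 with hx | hx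
    · simp [hx, Real.zero_rpow (sub_ne_zero.mpr hγ.ne')]
    · rw [abs_mul, abs_mul, abs_of_pos hγpos, abs_of_nonneg (by positivity), mul_assoc,
        ← Real.rpow_add_one (abs_ne_zero.mpr hx)]
      ring_nf
  rw [HasFDerivAt.fderiv (f := fun y => |u y| ^ γ)
      ((hasDerivAt_abs_rpow (u x) hγ).comp_hasFDerivAt x hu.hasFDerivAt), norm_smul,
    Real.norm_eq_abs, hderiv]

variable [MeasurableSpace E] {μ : Measure E}

theorem sobolev_abs_rpow {q θ p₀ A : ℝ}
    (hSob : ∀ v : E → ℝ, ContDiff ℝ 1 v → HasCompactSupport v →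
      (∫ x, |v x| ^ q ∂μ) ^ θ ≤ A * ∫ x, ‖fderiv ℝ v x‖ ^ p₀ ∂μ)
    (hu : ContDiff ℝ 1 u) (hu_supp : HasCompactSupport u) (hγ : 1 < γ) :
    (∫ x, |u x| ^ (γ * q) ∂μ) ^ θ ≤
      A * γ ^ p₀ * ∫ x, |u x| ^ ((γ - 1) * p₀) * ‖fderiv ℝ u x‖ ^ p₀ ∂μ := by
  have hγpos : 0 < γ := one_pos.trans hγ
  have hv := hSob (fun x => |u x| ^ γ) (by simpa only [Real.norm_eq_abs] using hu.norm_rpow hγ)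
    (hu_supp.abs.rpow_const hγpos.ne')
  have hu_diff : Differentiable ℝ u := hu.differentiable one_ne_zero
  simp only [abs_of_nonneg (Real.rpow_nonneg (abs_nonneg _) _),
    ← Real.rpow_mul (abs_nonneg _), norm_fderiv_abs_rpow hγ (hu_diff _)] at hv
  convert hv using 1
  rw [mul_assoc, ← integral_const_mul]
  congr 2 with x
  rw [Real.mul_rpow (by positivity) (norm_nonneg _),
    Real.mul_rpow hγpos.le (by positivity), ← Real.rpow_mul (abs_nonneg _), mul_assoc]

variable [OpensMeasurableSpace E] [IsFiniteMeasureOnCompacts μ]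

theorem integral_abs_rpow_mul_norm_fderiv_rpow_le {a p₀ p : ℝ} (ha : 0 < a) (hp₀ : 0 < p₀)
    (hp : p₀ < p) (hu : ContDiff ℝ 1 u) (hu_supp : HasCompactSupport u) :
    ∫ x, |u x| ^ a * ‖fderiv ℝ u x‖ ^ p₀ ∂μ ≤
      (∫ x, |u x| ^ (a * (p / (p - p₀))) ∂μ) ^ ((p - p₀) / p) *
        (∫ x, ‖fderiv ℝ u x‖ ^ p ∂μ) ^ (p₀ / p) := by
  have hpp₀ : 0 < p - p₀ := sub_pos.mpr hp
  have hp_pos : 0 < p := hp₀.trans hp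
  have hconj : (p / (p - p₀)).HolderConjugate (p / p₀) := by
    rw [Real.holderConjugate_iff]
    refine ⟨(one_lt_div hpp₀).mpr (by linarith), ?_⟩
    field_simp
    ring
  have hf : Continuous fun x => |u x| ^ a :=
    (Real.continuous_rpow_const ha.le).comp hu.continuous.abs
  have hg : Continuous fun x => ‖fderiv ℝ u x‖ ^ p₀ :=
    (Real.continuous_rpow_const hp₀.le).comp (hu.continuous_fderiv one_ne_zero).norm
  have holder := integral_mul_le_Lp_mul_Lq_of_nonneg (μ := μ) hconj
    (Filter.Eventually.of_forall fun x => by positivity)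
    (Filter.Eventually.of_forall fun x => by positivity)
    (hf.memLp_of_hasCompactSupport (hu_supp.abs.rpow_const ha.ne'))
    (hg.memLp_of_hasCompactSupport ((hu_supp.fderiv ℝ).norm.rpow_const hp₀.ne'))
  have hexp : p₀ * (p / p₀) = p := by field_simp
  simpa only [← Real.rpow_mul (abs_nonneg _), ← Real.rpow_mul (norm_nonneg _), hexp,
    one_div_div] using holder

end AbsRpow

theorem Real.rpow_le_of_rpow_le_mul_rpow_mul_rpow {X Y C a b c k : ℝ} (hX : 0 ≤ X) (hY : 0 ≤ Y)
    (hC : 0 ≤ C) (hba : b < a) (hk : 0 ≤ k) (h : X ^ a ≤ C * (X ^ b * Y ^ c)) :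
    X ^ ((a - b) * k) ≤ C ^ k * Y ^ (c * k) := by
  have habsorb : X ^ (a - b) ≤ C * Y ^ c := by
    rcases hX.eq_or_lt with rfl | hXpos
    · rw [Real.zero_rpow (sub_ne_zero.mpr hba.ne')]
      positivity
    · rw [Real.rpow_sub hXpos, div_le_iff₀ (by positivity)]
      linarith
  rw [Real.rpow_mul hX, Real.rpow_mul hY, ← Real.mul_rpow hC (by positivity)]
  exact Real.rpow_le_rpow (by positivity) habsorb hk

section ScalingExponent

variable {n p₀ p γ : ℝ}

theorem one_lt_scaling_exponent (hp₀ : 0 < p₀) (hp : p₀ < p) (hpn : p < n) :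
    1 < p * (n - p₀) / (p₀ * (n - p)) := by
  rw [one_lt_div (mul_pos hp₀ (sub_pos.mpr hpn))]
  nlinarith

theorem scaling_exponent_mul_sobolev_exponent (hp₀ : 0 < p₀) (hp₀n : p₀ < n) (hpn : p < n)
    (hγ : γ = p * (n - p₀) / (p₀ * (n - p))) :
    γ * (n * p₀ / (n - p₀)) = n * p / (n - p) := by
  have : p₀ ≠ 0 := hp₀.ne'
  have : n - p₀ ≠ 0 := sub_ne_zero.mpr hp₀n.ne'
  have : n - p ≠ 0 := sub_ne_zero.mpr hpn.ne'
  rw [hγ]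
  field_simp

theorem scaling_exponent_sub_one_mul_holder_exponent (hp₀ : 0 < p₀) (hp : p₀ < p)
    (hpn : p < n) (hγ : γ = p * (n - p₀) / (p₀ * (n - p))) :
    (γ - 1) * p₀ * (p / (p - p₀)) = n * p / (n - p) := by
  have : p - p₀ ≠ 0 := sub_ne_zero.mpr hp.ne'
  have : n - p ≠ 0 := sub_ne_zero.mpr hpn.ne'
  rw [hγ]
  field_simp
  ring

theorem holder_exponent_lt_sobolev_exponent (hp₀ : 0 < p₀) (hp : p₀ < p) (hpn : p < n) :
    (p - p₀) / p < (n - p₀) / n := by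
  rw [div_lt_div_iff₀ (by linarith) (by linarith)]
  nlinarith

theorem sobolev_exponent_sub_holder_exponent_mul (hp₀ : 0 < p₀) (hp : p₀ < p) (hpn : p < n) :
    ((n - p₀) / n - (p - p₀) / p) * (p / p₀) = (n - p) / n := by
  have : n ≠ 0 := by linarith
  have : p ≠ 0 := by linarith
  field_simp
  ring

end ScalingExponent

theorem sobolev_induction_step_infinite_volume_general
    (n : ℕ) (p₀ A : ℝ) (hp₀1 : 1 ≤ p₀) (hp₀n : p₀ < n) (hA : 0 < A)
    (hSob : ∀ u : EuclideanSpace ℝ (Fin n) → ℝ, ContDiff ℝ 1 u → HasCompactSupport u →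
      (∫ x, |u x| ^ ((n : ℝ) * p₀ / ((n : ℝ) - p₀))) ^ (((n : ℝ) - p₀) / n) ≤
        A * ∫ x, ‖fderiv ℝ u x‖ ^ p₀)
    (p : ℝ) (hp : p₀ < p) (hple : p ≤ (n : ℝ) ^ 2 * p₀ / (((n : ℝ) - p₀) ^ 2 + n * p₀)) :
    ∀ u : EuclideanSpace ℝ (Fin n) → ℝ, ContDiff ℝ 1 u → HasCompactSupport u →
      (∫ x, |u x| ^ ((n : ℝ) * p / ((n : ℝ) - p))) ^ (((n : ℝ) - p) / n) ≤
        (A * (p * ((n : ℝ) - p₀) / (p₀ * ((n : ℝ) - p))) ^ p₀) ^ (p / p₀) *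
          ∫ x, ‖fderiv ℝ u x‖ ^ p := by
  intro u hu hu_supp
  have hp₀ : 0 < p₀ := one_pos.trans_le hp₀1
  have hpn : p < n := hple.trans_lt <| by
    rw [div_lt_iff₀ (by nlinarith)]
    nlinarith
  set γ := p * ((n : ℝ) - p₀) / (p₀ * ((n : ℝ) - p)) with hγ_def
  have hγ : 1 < γ := one_lt_scaling_exponent hp₀ hp hpn
  have hSob_u := sobolev_abs_rpow hSob hu hu_supp hγ
  rw [scaling_exponent_mul_sobolev_exponent hp₀ hp₀n hpn hγ_def] at hSob_u
  have hHolder := integral_abs_rpow_mul_norm_fderiv_rpow_le (μ := volume)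
    (mul_pos (sub_pos.mpr hγ) hp₀) hp₀ hp hu hu_supp
  rw [scaling_exponent_sub_one_mul_holder_exponent hp₀ hp hpn hγ_def] at hHolder
  have hC : 0 ≤ A * γ ^ p₀ := mul_nonneg hA.le (Real.rpow_nonneg (one_pos.trans hγ).le _)
  have key := Real.rpow_le_of_rpow_le_mul_rpow_mul_rpow (k := p / p₀)
    (integral_nonneg fun x => by positivity) (integral_nonneg fun x => by positivity) hC
    (holder_exponent_lt_sobolev_exponent hp₀ hp hpn) (div_pos (hp₀.trans hp) hp₀).le
    (hSob_u.trans (mul_le_mul_of_nonneg_left hHolder hC))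
  rwa [sobolev_exponent_sub_holder_exponent_mul hp₀ hp hpn,
    div_mul_div_cancel₀ (hp₀.trans hp).ne', div_self hp₀.ne', Real.rpow_one] at key

theorem sobolev_induction_step_infinite_volume
    (n : ℕ) (hn : 2 ≤ n) (p₀ A : ℝ) (hp₀1 : 1 ≤ p₀) (hp₀n : p₀ < n) (hA : 0 < A)
    (hSob : ∀ u : EuclideanSpace ℝ (Fin n) → ℝ, ContDiff ℝ 1 u → HasCompactSupport u →
      (∫ x, |u x| ^ ((n : ℝ) * p₀ / ((n : ℝ) - p₀))) ^ (((n : ℝ) - p₀) / n) ≤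
        A * ∫ x, ‖fderiv ℝ u x‖ ^ p₀)
    (p : ℝ) (hp : p₀ < p) (hple : p ≤ (n : ℝ) ^ 2 * p₀ / (((n : ℝ) - p₀) ^ 2 + n * p₀)) :
    ∀ u : EuclideanSpace ℝ (Fin n) → ℝ, ContDiff ℝ 1 u → HasCompactSupport u →
      (∫ x, |u x| ^ ((n : ℝ) * p / ((n : ℝ) - p))) ^ (((n : ℝ) - p) / n) ≤
        (A * (p * ((n : ℝ) - p₀) / (p₀ * ((n : ℝ) - p))) ^ p₀) ^ (p / p₀) *
          ∫ x, ‖fderiv ℝ u x‖ ^ p :=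
  sobolev_induction_step_infinite_volume_general n p₀ A hp₀1 hp₀n hA hSob p hp hple
end

section
/- Let (X, μ) be a measure space, let m > 2 be a real number, let A > 0 and Q ≥ 0 be real numbers, and let u : X → ℝ be a measurable function with ∫ u² dμ = 1 such that |u|^{2m/(m−2)} is integrable and x ↦ u(x)² ln u(x)² is integrable. Assume (∫ |u|^{2m/(m−2)} dμ)^{(m−2)/m} ≤ A · Q. Then for every σ > 0 one has ∫ u² ln u² dμ ≤ σ Q − (m/2) ln σ + (m/2) ln(m/2) + (m/2) ln A − 1. -/
/-!
With `r = 2 / (m - 2)`, so that `2 m / (m - 2) = 2 (1 + r)`, Jensen's inequality for the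
concave `log` under the probability measure `u² dμ` gives
`r ∫ u² ln u² ≤ ln ∫ |u| ^ (2 m / (m - 2))`, and the Sobolev inequality bounds the right-hand
side by `(m / (m - 2)) ln (A Q)`. The tangent-line bound `ln y ≤ y - 1` at `y = 2 σ Q / m`
then trades `ln Q` for `σ Q`.
-/

open MeasureTheory Real

-- `log x ≤ x - 1` at `x = t ^ r / c`, multiplied by `t`.
lemma mul_mul_log_le_rpow_div_sub_add_mul_log {r c t : ℝ} (hr : 0 < r) (hc : 0 < c) (ht : 0 ≤ t) :
    r * (t * log t) ≤ t ^ (1 + r) / c - t + t * log c := by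
  rcases ht.eq_or_lt with rfl | ht
  · simp [zero_rpow (by positivity : 1 + r ≠ 0)]
  have htr : 0 < t ^ r := rpow_pos_of_pos ht r
  have hlog : r * log t - log c ≤ t ^ r / c - 1 := by
    rw [← log_rpow ht, ← log_div htr.ne' hc.ne']
    exact log_le_sub_one_of_pos (by positivity)
  have hpow : t ^ (1 + r) = t * t ^ r := by rw [rpow_add ht, rpow_one]
  rw [hpow]
  have := mul_le_mul_of_nonneg_left hlog ht.le
  field_simp at this ⊢
  linarith

lemma mul_log_le_mul_add_mul_log_div {a σ y : ℝ} (ha : 0 < a) (hσ : 0 < σ) (hy : 0 < y) :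
    a * log y ≤ σ * y + a * log (a / σ) - a := by
  have h := log_le_sub_one_of_pos (by positivity : 0 < σ / a * y)
  rw [log_mul (by positivity) hy.ne', log_div hσ.ne' ha.ne'] at h
  rw [log_div ha.ne' hσ.ne']
  have := mul_le_mul_of_nonneg_left h ha.le
  field_simp at this
  nlinarith

section Entropy

variable {X : Type*} [MeasurableSpace X] {μ : Measure X}

lemma integral_rpow_pos {f : X → ℝ} {p : ℝ} (hf : 0 ≤ f)
    (hf0 : ∫ x, f x ∂μ ≠ 0) (hfp : Integrable (fun x => f x ^ p) μ) :
    0 < ∫ x, f x ^ p ∂μ := by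
  refine (integral_nonneg fun x => rpow_nonneg (hf x) p).lt_of_ne fun h => hf0 ?_
  have hzero := (integral_eq_zero_iff_of_nonneg (fun x => rpow_nonneg (hf x) p) hfp).mp h.symm
  refine integral_eq_zero_of_ae ?_
  filter_upwards [hzero] with x hx
  exact ((rpow_eq_zero_iff_of_nonneg (hf x)).mp hx).1

lemma mul_integral_mul_log_le_log_integral_rpow {f : X → ℝ} {r : ℝ} (hr : 0 < r) (hf : 0 ≤ f)
    (hf1 : ∫ x, f x ∂μ = 1) (hflog : Integrable (fun x => f x * log (f x)) μ)
    (hfr : Integrable (fun x => f x ^ (1 + r)) μ) :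
    r * ∫ x, f x * log (f x) ∂μ ≤ log (∫ x, f x ^ (1 + r) ∂μ) := by
  set I := ∫ x, f x ^ (1 + r) ∂μ
  have hI : 0 < I := integral_rpow_pos hf (by simp [hf1]) hfr
  have hfint : Integrable f μ := Integrable.of_integral_ne_zero (by simp [hf1])
  have hpow_sub : Integrable (fun x => f x ^ (1 + r) / I - f x) μ := (hfr.div_const I).sub hfint
  have hbound : Integrable (fun x => f x ^ (1 + r) / I - f x + f x * log I) μ :=
    hpow_sub.add (hfint.mul_const _)
  calc r * ∫ x, f x * log (f x) ∂μ
      = ∫ x, r * (f x * log (f x)) ∂μ := (integral_const_mul r _).symm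
    _ ≤ ∫ x, (f x ^ (1 + r) / I - f x + f x * log I) ∂μ :=
        integral_mono (hflog.const_mul r) hbound
          fun x => mul_mul_log_le_rpow_div_sub_add_mul_log hr hI (hf x)
    _ = log I := by
        rw [integral_add hpow_sub (hfint.mul_const _),
          integral_sub (hfr.div_const I) hfint, integral_div, integral_mul_const, hf1,
          div_self hI.ne']
        ring

end Entropy

theorem log_sobolev_from_sobolev_general {X : Type*} [MeasurableSpace X] (μ : Measure X)
    (m : ℝ) (hm : 2 < m) (A Q : ℝ) (hA : 0 < A)
    (u : X → ℝ)
    (hnorm : ∫ x, (u x) ^ 2 ∂μ = 1)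
    (hint1 : Integrable (fun x => |u x| ^ (2 * m / (m - 2))) μ)
    (hint2 : Integrable (fun x => (u x) ^ 2 * Real.log ((u x) ^ 2)) μ)
    (hSob : (∫ x, |u x| ^ (2 * m / (m - 2)) ∂μ) ^ ((m - 2) / m) ≤ A * Q) :
    ∀ σ : ℝ, 0 < σ →
      ∫ x, (u x) ^ 2 * Real.log ((u x) ^ 2) ∂μ ≤
        σ * Q - (m / 2) * Real.log σ + (m / 2) * Real.log (m / 2) +
          (m / 2) * Real.log A - 1 := by
  intro σ hσ
  have hm2 : 0 < m - 2 := by linarith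
  set E := ∫ x, u x ^ 2 * log (u x ^ 2) ∂μ
  set I := ∫ x, |u x| ^ (2 * m / (m - 2)) ∂μ
  have hpow : (fun x => (u x ^ 2) ^ (1 + 2 / (m - 2))) = fun x => |u x| ^ (2 * m / (m - 2)) := by
    funext x
    rw [← sq_abs, ← rpow_natCast_mul (abs_nonneg _)]
    congr 1
    field_simp
    ring
  have hint1' : Integrable (fun x => (u x ^ 2) ^ (1 + 2 / (m - 2))) μ := hpow ▸ hint1
  have hjensen : 2 / (m - 2) * E ≤ log I :=
    (mul_integral_mul_log_le_log_integral_rpow (by positivity) (fun x => sq_nonneg (u x)) hnorm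
      hint2 hint1').trans_eq (by rw [hpow])
  have hI : 0 < I :=
    (integral_rpow_pos (fun x => sq_nonneg (u x)) (by simp [hnorm]) hint1').trans_eq
      (by rw [hpow])
  have hQ : 0 < Q := pos_of_mul_pos_right ((rpow_pos_of_pos hI _).trans_le hSob) hA.le
  have hsob_log : (m - 2) / m * log I ≤ log A + log Q := by
    rw [← log_rpow hI, ← log_mul hA.ne' hQ.ne']
    exact log_le_log (rpow_pos_of_pos hI _) hSob
  have hQ_log := mul_log_le_mul_add_mul_log_div (by positivity : 0 < m / 2) hσ hQ
  rw [log_div (by positivity) hσ.ne'] at hQ_log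
  calc E = m / 2 * ((m - 2) / m * (2 / (m - 2) * E)) := by field_simp
    _ ≤ m / 2 * ((m - 2) / m * log I) := by gcongr
    _ ≤ m / 2 * (log A + log Q) := by gcongr
    _ ≤ _ := by linarith

theorem log_sobolev_from_sobolev {X : Type*} [MeasurableSpace X] (μ : Measure X)
    (m : ℝ) (hm : 2 < m) (A Q : ℝ) (hA : 0 < A) (hQ : 0 ≤ Q)
    (u : X → ℝ) (hu : Measurable u)
    (hnorm : ∫ x, (u x) ^ 2 ∂μ = 1)
    (hint1 : Integrable (fun x => |u x| ^ (2 * m / (m - 2))) μ)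
    (hint2 : Integrable (fun x => (u x) ^ 2 * Real.log ((u x) ^ 2)) μ)
    (hSob : (∫ x, |u x| ^ (2 * m / (m - 2)) ∂μ) ^ ((m - 2) / m) ≤ A * Q) :
    ∀ σ : ℝ, 0 < σ →
      ∫ x, (u x) ^ 2 * Real.log ((u x) ^ 2) ∂μ ≤
        σ * Q - (m / 2) * Real.log σ + (m / 2) * Real.log (m / 2) +
          (m / 2) * Real.log A - 1 :=
  log_sobolev_from_sobolev_general μ m hm A Q hA u hnorm hint1 hint2 hSob
end

section
/- Let n ≥ 2, let u : ℝ^n → ℝ be a twice continuously differentiable function with u ∈ L²(ℝ^n) (that is, u² is Lebesgue integrable), let Ψ : ℝ^n → ℝ be a measurable function with 0 ≤ Ψ(x) ≤ K for all x and some constant K, and let λ < 0. Assume that −Δu(x) + Ψ(x)u(x) = λ u(x) for every x ∈ ℝ^n. Then u is identically zero. -/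
open MeasureTheory

/-- The Euclidean Laplacian of `u : ℝⁿ → ℝ`, i.e. the trace of the second derivative:
the sum of the pure second directional derivatives along the standard basis directions. -/
noncomputable def euclideanLaplacian {n : ℕ} (u : EuclideanSpace ℝ (Fin n) → ℝ)
    (x : EuclideanSpace ℝ (Fin n)) : ℝ :=
  ∑ i : Fin n, iteratedFDeriv ℝ 2 u x ![EuclideanSpace.single i 1, EuclideanSpace.single i 1]

/-!
Since `Δu = (Ψ - λ) u` with `Ψ ≥ 0 > λ`, we have `u Δu ≥ -λ u²`. Testing against `φ² u` for a
cutoff `φ` and integrating by parts direction by direction gives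
`-λ ∫ φ² u² ≤ ∫ φ² u Δu ≤ ∫ u² ‖Dφ‖²`, because `-∂ᵥ(φ² u) ∂ᵥu = u² (∂ᵥφ)² - (φ ∂ᵥu + u ∂ᵥφ)²`.
A cutoff equal to `1` on the ball of radius `r` with `‖Dφ‖ ≤ C / r` yields
`∫_{B_r} u² ≤ C² ‖u‖₂² / (-λ r²)`; letting `r → ∞` gives `∫ u² = 0`, and `u` is continuous.
-/

open InnerProductSpace Laplacian Metric Set Filter Topology

section NormedSpace

variable {E : Type*} [NormedAddCommGroup E] [NormedSpace ℝ E] [FiniteDimensional ℝ E]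

theorem exists_cutoff_fderiv_le :
    ∃ C, ∀ r > 0, ∃ φ : E → ℝ, ContDiff ℝ 1 φ ∧ HasCompactSupport φ ∧
      EqOn φ 1 (ball 0 r) ∧ ∀ x, ‖fderiv ℝ φ x‖ ≤ C / r := by
  let b : ContDiffBump (0 : E) := ⟨1, 2, one_pos, one_lt_two⟩
  obtain ⟨C, hC⟩ := ((b.contDiff (n := 1)).continuous_fderiv one_ne_zero)
    |>.bounded_above_of_compact_support (b.hasCompactSupport.fderiv ℝ)
  refine ⟨C, fun r hr => ⟨fun x => b (r⁻¹ • x), b.contDiff.comp (contDiff_const_smul _),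
    b.hasCompactSupport.comp_smul (inv_ne_zero hr.ne'), fun x hx => ?_, fun x => ?_⟩⟩
  · refine b.one_of_mem_closedBall ?_
    rw [mem_ball_zero_iff] at hx
    rw [mem_closedBall_zero_iff, norm_smul, norm_inv, Real.norm_of_nonneg hr.le]
    change r⁻¹ * ‖x‖ ≤ 1
    rw [inv_mul_le_iff₀ hr]
    linarith
  · rw [fderiv_comp_smul, norm_smul, norm_inv, Real.norm_of_nonneg hr.le, div_eq_inv_mul]
    exact mul_le_mul_of_nonneg_left (hC _) (by positivity)

variable [MeasurableSpace E] [BorelSpace E] {μ : Measure E} [μ.IsAddHaarMeasure]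

theorem integral_sq_mul_mul_iteratedFDeriv_two_le {u φ : E → ℝ} (hu : ContDiff ℝ 2 u)
    (hφ : ContDiff ℝ 1 φ) (hφs : HasCompactSupport φ) (v : E) :
    ∫ x, φ x ^ 2 * u x * iteratedFDeriv ℝ 2 u x ![v, v] ∂μ
      ≤ ∫ x, u x ^ 2 * fderiv ℝ φ x v ^ 2 ∂μ := by
  have hu1 : ContDiff ℝ 1 u := hu.of_le one_le_two
  have hDu : ContDiff ℝ 1 (fderiv ℝ u) := hu.fderiv_right le_rfl
  have hf : ContDiff ℝ 1 fun x => φ x ^ 2 * u x := (hφ.pow 2).mul hu1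
  have hg : ContDiff ℝ 1 fun x => fderiv ℝ u x v := hDu.clm_apply contDiff_const
  have integrable {F : E → ℝ} (hF : Continuous F) (h0 : ∀ x, φ x = 0 → F x = 0) :
      Integrable F μ :=
    hF.integrable_of_hasCompactSupport (hφs.mono fun x hx hφx => hx (h0 x hφx))
  have hfderiv_f (x : E) : fderiv ℝ (fun x => φ x ^ 2 * u x) x v
      = 2 * φ x * fderiv ℝ φ x v * u x + φ x ^ 2 * fderiv ℝ u x v := by
    have hφx := (hφ.differentiable one_ne_zero x).hasFDerivAt
    have hux := (hu1.differentiable one_ne_zero x).hasFDerivAt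
    rw [((hφx.pow 2).fun_mul hux).fderiv]
    simp only [add_apply, smul_apply, smul_eq_mul]
    ring
  have hfderiv_g (x : E) : fderiv ℝ (fun x => fderiv ℝ u x v) x v
      = iteratedFDeriv ℝ 2 u x ![v, v] := by
    rw [iteratedFDeriv_two_apply, fderiv_clm_apply (hDu.differentiable one_ne_zero x)
      (differentiableAt_const v)]
    simp
  have hf'g : Integrable (fun x => fderiv ℝ (fun x => φ x ^ 2 * u x) x v * fderiv ℝ u x v) μ :=
    integrable ((hf.continuous_fderiv one_ne_zero).clm_apply continuous_const |>.mul
      hg.continuous) fun x hx => by simp [hfderiv_f, hx]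
  have hibp := integral_mul_fderiv_eq_neg_fderiv_mul_of_integrable (μ := μ) hf'g
    (integrable (hf.continuous.mul (hg.continuous_fderiv one_ne_zero |>.clm_apply
      continuous_const)) fun x hx => by simp [hx])
    (integrable (hf.continuous.mul hg.continuous) fun x hx => by simp [hx])
    (fun x _ => hf.differentiable one_ne_zero x) (fun x _ => hg.differentiable one_ne_zero x)
  simp only [hfderiv_f, hfderiv_g] at hibp
  rw [hibp, ← integral_neg]
  refine integral_mono ?_ ?_ fun x => ?_
  · simpa only [hfderiv_f] using hf'g.fun_neg
  · exact ((hu1.continuous.pow 2).mul (((hφ.continuous_fderiv one_ne_zero).clm_apply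
      continuous_const).pow 2)).integrable_of_hasCompactSupport
      ((hφs.fderiv ℝ).mono fun x hx h0 => hx (by simp [h0]))
  · nlinarith [sq_nonneg (φ x * fderiv ℝ u x v + u x * fderiv ℝ φ x v)]

end NormedSpace

theorem ContDiff.continuous_laplacian {E F : Type*} [NormedAddCommGroup E]
    [InnerProductSpace ℝ E] [FiniteDimensional ℝ E] [NormedAddCommGroup F] [NormedSpace ℝ F]
    {u : E → F} (hu : ContDiff ℝ 2 u) : Continuous (Δ u) := by
  rw [laplacian_eq_iteratedFDeriv_stdOrthonormalBasis]
  exact continuous_finsetSum _ fun i _ =>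
    (continuous_eval_const _).comp (hu.continuous_iteratedFDeriv le_rfl)

section InnerProductSpace

variable {E : Type*} [NormedAddCommGroup E] [InnerProductSpace ℝ E] [FiniteDimensional ℝ E]
  [MeasurableSpace E] [BorelSpace E] {μ : Measure E} [μ.IsAddHaarMeasure] {u : E → ℝ}

theorem integral_sq_mul_mul_laplacian_le {φ : E → ℝ} (hu : ContDiff ℝ 2 u)
    (hφ : ContDiff ℝ 1 φ) (hφs : HasCompactSupport φ) :
    ∫ x, φ x ^ 2 * u x * Δ u x ∂μ ≤ ∫ x, u x ^ 2 * ‖fderiv ℝ φ x‖ ^ 2 ∂μ := by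
  let b := stdOrthonormalBasis ℝ E
  have hD2u : Continuous (iteratedFDeriv ℝ 2 u) := hu.continuous_iteratedFDeriv le_rfl
  have hDφ : Continuous (fderiv ℝ φ) := hφ.continuous_fderiv one_ne_zero
  simp_rw [laplacian_eq_iteratedFDeriv_orthonormalBasis u b, b.norm_dual, Finset.mul_sum]
  rw [integral_finsetSum _ fun i _ => ?_, integral_finsetSum _ fun i _ => ?_]
  · exact Finset.sum_le_sum fun i _ => integral_sq_mul_mul_iteratedFDeriv_two_le hu hφ hφs (b i)
  · exact ((hu.continuous.pow 2).mul ((hDφ.clm_apply continuous_const).pow 2))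
      |>.integrable_of_hasCompactSupport ((hφs.fderiv ℝ).mono fun x hx h0 => hx (by simp [h0]))
  · exact ((hφ.continuous.pow 2).mul hu.continuous |>.mul
      ((continuous_eval_const _).comp hD2u)).integrable_of_hasCompactSupport
      (hφs.mono fun x hx h0 => hx (by simp [h0]))

variable {c : ℝ}

theorem exists_setIntegral_ball_sq_le (hu : ContDiff ℝ 2 u)
    (huL2 : Integrable (fun x => u x ^ 2) μ) (hc : 0 < c)
    (hΔu : ∀ x, c * u x ^ 2 ≤ u x * Δ u x) :
    ∃ A, ∀ r > 0, ∫ x in ball 0 r, u x ^ 2 ∂μ ≤ A / r ^ 2 := by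
  obtain ⟨C, hC⟩ := exists_cutoff_fderiv_le (E := E)
  refine ⟨C ^ 2 * (∫ x, u x ^ 2 ∂μ) / c, fun r hr => ?_⟩
  obtain ⟨φ, hφ, hφs, hφ1, hDφ⟩ := hC r hr
  have hφu : Integrable (fun x => φ x ^ 2 * u x ^ 2) μ :=
    ((hφ.continuous.pow 2).mul (hu.continuous.pow 2)).integrable_of_hasCompactSupport
      (hφs.mono fun x hx h0 => hx (by simp [h0]))
  have hφuΔu : Integrable (fun x => φ x ^ 2 * u x * Δ u x) μ :=
    ((hφ.continuous.pow 2).mul hu.continuous |>.mul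
      hu.continuous_laplacian).integrable_of_hasCompactSupport
      (hφs.mono fun x hx h0 => hx (by simp [h0]))
  have henergy : c * ∫ x, φ x ^ 2 * u x ^ 2 ∂μ ≤ (C / r) ^ 2 * ∫ x, u x ^ 2 ∂μ := calc
    c * ∫ x, φ x ^ 2 * u x ^ 2 ∂μ = ∫ x, φ x ^ 2 * (c * u x ^ 2) ∂μ := by
      rw [← integral_const_mul]; congr 1 with x; ring
    _ ≤ ∫ x, φ x ^ 2 * u x * Δ u x ∂μ := by
      refine integral_mono (by simpa [mul_left_comm] using hφu.const_mul c) hφuΔu fun x => ?_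
      rw [mul_assoc]
      exact mul_le_mul_of_nonneg_left (hΔu x) (sq_nonneg _)
    _ ≤ ∫ x, u x ^ 2 * ‖fderiv ℝ φ x‖ ^ 2 ∂μ := integral_sq_mul_mul_laplacian_le hu hφ hφs
    _ ≤ ∫ x, u x ^ 2 * (C / r) ^ 2 ∂μ := by
      refine integral_mono_of_nonneg (ae_of_all _ fun x => by positivity)
        (huL2.mul_const _) (ae_of_all _ fun x => ?_)
      exact mul_le_mul_of_nonneg_left (pow_le_pow_left₀ (norm_nonneg _) (hDφ x) 2)
        (sq_nonneg _)
    _ = (C / r) ^ 2 * ∫ x, u x ^ 2 ∂μ := by rw [integral_mul_const, mul_comm]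
  calc ∫ x in ball 0 r, u x ^ 2 ∂μ = ∫ x in ball 0 r, φ x ^ 2 * u x ^ 2 ∂μ :=
        setIntegral_congr_fun measurableSet_ball fun x hx => by simp [hφ1 hx]
    _ ≤ ∫ x, φ x ^ 2 * u x ^ 2 ∂μ :=
        setIntegral_le_integral hφu (ae_of_all _ fun x => by positivity)
    _ ≤ (C / r) ^ 2 * (∫ x, u x ^ 2 ∂μ) / c := by rwa [le_div_iff₀ hc, mul_comm]
    _ = C ^ 2 * (∫ x, u x ^ 2 ∂μ) / c / r ^ 2 := by ring

theorem eq_zero_of_mul_laplacian_ge (hu : ContDiff ℝ 2 u)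
    (huL2 : Integrable (fun x => u x ^ 2) μ) (hc : 0 < c)
    (hΔu : ∀ x, c * u x ^ 2 ≤ u x * Δ u x) : u = 0 := by
  obtain ⟨A, hA⟩ := exists_setIntegral_ball_sq_le hu huL2 hc hΔu
  have hballs : Tendsto (fun n : ℕ => ∫ x in ball 0 (n : ℝ), u x ^ 2 ∂μ) atTop
      (𝓝 (∫ x, u x ^ 2 ∂μ)) := by
    simpa [iUnion_ball_nat] using tendsto_setIntegral_of_monotone (fun _ => measurableSet_ball)
      (fun m n hmn => ball_subset_ball (Nat.cast_le.mpr hmn)) huL2.integrableOn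
  have hA' : ∀ᶠ n : ℕ in atTop, ∫ x in ball 0 (n : ℝ), u x ^ 2 ∂μ ≤ A / (n : ℝ) ^ 2 :=
    eventually_gt_atTop 0 |>.mono fun n hn => hA n (Nat.cast_pos.mpr hn)
  have hzero : ∫ x, u x ^ 2 ∂μ = 0 := le_antisymm
    (le_of_tendsto_of_tendsto hballs (tendsto_const_div_pow A 2 two_ne_zero) hA')
    (integral_nonneg fun x => sq_nonneg _)
  have hae : (fun x => u x ^ 2) =ᵐ[μ] 0 :=
    (integral_eq_zero_iff_of_nonneg (fun x => sq_nonneg _) huL2).mp hzero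
  have hsq := (Continuous.ae_eq_iff_eq μ (hu.continuous.pow 2) continuous_const).mp hae
  funext x
  exact pow_eq_zero_iff two_ne_zero |>.mp (congrFun hsq x)

end InnerProductSpace

theorem euclideanLaplacian_eq_laplacian {n : ℕ} (u : EuclideanSpace ℝ (Fin n) → ℝ) :
    euclideanLaplacian u = Δ u := by
  rw [laplacian_eq_iteratedFDeriv_orthonormalBasis u (EuclideanSpace.basisFun (Fin n) ℝ)]
  ext x
  simp [euclideanLaplacian]

theorem no_negative_L2_eigenvalue_general
    (n : ℕ) (u : EuclideanSpace ℝ (Fin n) → ℝ) (hu : ContDiff ℝ 2 u)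
    (huL2 : Integrable (fun x => (u x) ^ 2))
    (Ψ : EuclideanSpace ℝ (Fin n) → ℝ)
    (K : ℝ) (hΨ : ∀ x, 0 ≤ Ψ x ∧ Ψ x ≤ K)
    (lam : ℝ) (hlam : lam < 0)
    (heig : ∀ x, -euclideanLaplacian u x + Ψ x * u x = lam * u x) :
    ∀ x, u x = 0 := by
  have hΔu (x : EuclideanSpace ℝ (Fin n)) : -lam * u x ^ 2 ≤ u x * Δ u x := by
    have hΔ : u x * euclideanLaplacian u x = (Ψ x - lam) * u x ^ 2 := by
      linear_combination -u x * heig x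
    rw [← euclideanLaplacian_eq_laplacian, hΔ]
    nlinarith [mul_nonneg (hΨ x).1 (sq_nonneg (u x))]
  exact congrFun (eq_zero_of_mul_laplacian_ge hu huL2 (neg_pos.mpr hlam) hΔu)

theorem no_negative_L2_eigenvalue
    (n : ℕ) (hn : 2 ≤ n) (u : EuclideanSpace ℝ (Fin n) → ℝ) (hu : ContDiff ℝ 2 u)
    (huL2 : Integrable (fun x => (u x) ^ 2))
    (Ψ : EuclideanSpace ℝ (Fin n) → ℝ) (hΨmeas : Measurable Ψ)
    (K : ℝ) (hΨ : ∀ x, 0 ≤ Ψ x ∧ Ψ x ≤ K)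
    (lam : ℝ) (hlam : lam < 0)
    (heig : ∀ x, -euclideanLaplacian u x + Ψ x * u x = lam * u x) :
    ∀ x, u x = 0 :=
  no_negative_L2_eigenvalue_general n u hu huL2 Ψ K hΨ lam hlam heig
end
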